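/- arXiv:2312.13653 — 2 statements merged into one kernel-verified Lean document; each statement's English description precedes it below -/
import Mathlib

section
/- Let χ(s) = (s+1)·log(s+1) − s. Then for every s > 0, χ(s) ≤ s·log(s) + 1 − log(e−1), and equality holds at s = 1/(e−1). -/
/-!
Write `g(s) = (s+1) log(s+1) - s log s`, so that the claim is `g(s) ≤ s + 1 - log(e-1)`.
Add the tangent-line bound `log u ≤ u / e` of `log` at `e` for `u = (s+1)(e-1)` and,
weighted by `s`, for `u = (s+1)/s`: the right-hand sides sum to exactly `s + 1`.
Both bounds are equalities when `(s+1)/s = e`, i.e. at `s = 1/(e-1)`.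
-/

noncomputable def chi (s : ℝ) : ℝ := (s + 1) * Real.log (s + 1) - s

open Real

lemma Real.log_le_div_exp_one {u : ℝ} (hu : 0 < u) : log u ≤ u / exp 1 := by
  have h := log_le_sub_one_of_pos (div_pos hu (exp_pos 1))
  rw [log_div hu.ne' (exp_pos 1).ne', log_exp] at h
  linarith

lemma exp_one_sub_one_pos : 0 < exp 1 - 1 :=
  sub_pos.2 (one_lt_exp_iff.2 one_pos)

lemma add_one_mul_log_add_one_sub_mul_log_le {s : ℝ} (hs : 0 < s) :
    (s + 1) * log (s + 1) - s * log s ≤ s + 1 - log (exp 1 - 1) := by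
  have hs₁ : 0 < s + 1 := by linarith
  have hc := exp_one_sub_one_pos
  have h₁ : log (s + 1) + log (exp 1 - 1) ≤ (s + 1) * (exp 1 - 1) / exp 1 := by
    rw [← log_mul hs₁.ne' hc.ne']
    exact log_le_div_exp_one (mul_pos hs₁ hc)
  have h₂ : s * (log (s + 1) - log s) ≤ (s + 1) / exp 1 := by
    have h := log_le_div_exp_one (div_pos hs₁ hs)
    rw [log_div hs₁.ne' hs.ne'] at h
    calc s * (log (s + 1) - log s) ≤ s * ((s + 1) / s / exp 1) := by gcongr
      _ = (s + 1) / exp 1 := by field_simp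
  have hsum : (s + 1) * (exp 1 - 1) / exp 1 + (s + 1) / exp 1 = s + 1 := by
    field_simp
    ring
  linear_combination h₁ + h₂ + hsum

lemma log_one_div_exp_one_sub_one_add_one :
    log (1 / (exp 1 - 1) + 1) = 1 - log (exp 1 - 1) := by
  have hc := exp_one_sub_one_pos
  have h : 1 / (exp 1 - 1) + 1 = exp 1 / (exp 1 - 1) := by
    field_simp
    ring
  rw [h, log_div (exp_pos 1).ne' hc.ne', log_exp]

theorem chi_le_xlogx :
    (∀ s : ℝ, 0 < s →
      chi s ≤ s * Real.log s + 1 - Real.log (Real.exp 1 - 1)) ∧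
    chi (1 / (Real.exp 1 - 1)) =
      (1 / (Real.exp 1 - 1)) * Real.log (1 / (Real.exp 1 - 1)) + 1
        - Real.log (Real.exp 1 - 1) := by
  refine ⟨fun s hs => ?_, ?_⟩
  · have h := add_one_mul_log_add_one_sub_mul_log_le hs
    unfold chi
    linarith
  · rw [chi, log_one_div_exp_one_sub_one_add_one, one_div, log_inv]
    ring
end

section
/- Let (X, μ) be a finite measure space and let χ(s) = (s+1)·log(s+1) − s. Suppose f: X → [0,∞) is measurable and ∫_X f·log(f) dμ ≤ A for some real A (with the convention 0·log 0 = 0). Set A' := max{A + μ(X)·(1 − log(e−1)), 2}. Then ∫_X χ(f/A') dμ ≤ 1; in particular the Luxembourg norm ‖f‖_{L^χ(μ)} := inf{c > 0 : ∫_X χ(|f|/c) dμ ≤ 1} is at most A'. -/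
/-!
Two pointwise facts about `chi` do the work. First, `chi` is convex on `[-1, ∞)` with
`chi 0 = 0`, so `chi (s / c) ≤ chi s / c` for `c ≥ 1`. Second, the two-term log-sum
inequality, applied to the pairs `(s, 1)` and `(1, e - 1)`, gives
`chi s ≤ s log s + 1 - log (e - 1)`. Integrating,
`∫ chi (f / A') ≤ (A + μ(X) (1 - log (e - 1))) / A'`, which is at most `1` by the choice of `A'`.
-/

open MeasureTheory

/-- The Luxembourg norm with weight `chi`. -/
noncomputable def luxNorm {X : Type*} [MeasurableSpace X] (μ : Measure X)
    (f : X → ℝ) : ℝ :=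
  sInf {c : ℝ | 0 < c ∧ ∫ x, chi (|f x| / c) ∂μ ≤ 1}

theorem ConvexOn.map_smul_le_smul_of_map_zero_nonpos {E : Type*} [AddCommGroup E] [Module ℝ E]
    {s : Set E} {f : E → ℝ} (hf : ConvexOn ℝ s f) (h0 : (0 : E) ∈ s) (hf0 : f 0 ≤ 0)
    {x : E} (hx : x ∈ s) {t : ℝ} (ht0 : 0 ≤ t) (ht1 : t ≤ 1) : f (t • x) ≤ t * f x := by
  have h := hf.2 hx h0 ht0 (sub_nonneg.2 ht1) (add_sub_cancel t 1)
  simp only [smul_zero, add_zero, smul_eq_mul] at h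
  linarith [mul_nonpos_of_nonneg_of_nonpos (sub_nonneg.2 ht1) hf0]

theorem continuous_chi : Continuous chi :=
  (Real.continuous_mul_log.comp (continuous_add_const 1)).sub continuous_id

theorem chi_zero : chi 0 = 0 := by
  simp [chi]

theorem chi_nonneg {s : ℝ} (hs : -1 < s) : 0 ≤ chi s := by
  have hs1 : 0 < s + 1 := by linarith
  have hlog := Real.one_sub_inv_le_log_of_pos hs1
  have : (s + 1) * (1 - (s + 1)⁻¹) = s := by field_simp; ring
  unfold chi
  linarith [mul_le_mul_of_nonneg_left hlog hs1.le]

theorem convexOn_chi : ConvexOn ℝ (Set.Ici (-1)) chi := by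
  have h := Real.convexOn_mul_log.translate_left 1
  have hdom : (fun z : ℝ => 1 + z) ⁻¹' Set.Ici 0 = Set.Ici (-1) := by
    ext z
    simp [neg_le_iff_add_nonneg']
  rw [hdom] at h
  exact h.sub (concaveOn_id (convex_Ici _))

theorem chi_div_le {s c : ℝ} (hs : -1 ≤ s) (hc : 1 ≤ c) : chi (s / c) ≤ chi s / c := by
  have h := convexOn_chi.map_smul_le_smul_of_map_zero_nonpos (by norm_num) chi_zero.le
    (Set.mem_Ici.2 hs) (inv_nonneg.2 (by linarith)) (inv_le_one_of_one_le₀ hc)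
  simpa only [smul_eq_mul, inv_mul_eq_div] using h

theorem chi_le_mul_log_add {s : ℝ} (hs : 0 ≤ s) :
    chi s ≤ s * Real.log s + (1 - Real.log (Real.exp 1 - 1)) := by
  have he : 0 < Real.exp 1 - 1 := by linarith [Real.add_one_lt_exp one_ne_zero]
  have hs1 : 0 < s + 1 := by linarith
  have hlog_lt : Real.log (Real.exp 1 - 1) < 1 := by
    simpa using Real.log_lt_log he (by linarith : Real.exp 1 - 1 < Real.exp 1)
  rcases hs.eq_or_lt with rfl | hs0
  · rw [chi_zero, zero_mul, zero_add, sub_nonneg]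
    exact hlog_lt.le
  -- `1 - x⁻¹ ≤ log x` at the two ratios of the log-sum inequality; the weighted bounds cancel.
  have h1 := Real.one_sub_inv_le_log_of_pos (by positivity : 0 < s * Real.exp 1 / (s + 1))
  have h2 := Real.one_sub_inv_le_log_of_pos
    (by positivity : 0 < Real.exp 1 / ((Real.exp 1 - 1) * (s + 1)))
  rw [Real.log_div (by positivity) hs1.ne', Real.log_mul hs0.ne' (Real.exp_ne_zero 1),
    Real.log_exp] at h1
  rw [Real.log_div (Real.exp_ne_zero 1) (by positivity), Real.log_mul he.ne' hs1.ne',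
    Real.log_exp] at h2
  have h1s := mul_le_mul_of_nonneg_left h1 hs
  have hsum : s * (1 - (s * Real.exp 1 / (s + 1))⁻¹)
      + (1 - (Real.exp 1 / ((Real.exp 1 - 1) * (s + 1)))⁻¹) = 0 := by
    field_simp
    ring
  unfold chi
  linarith

theorem luxNorm_le_of_integral_chi_le_one {X : Type*} [MeasurableSpace X] {μ : Measure X}
    {f : X → ℝ} {c : ℝ} (hc : 0 < c) (h : ∫ x, chi (|f x| / c) ∂μ ≤ 1) : luxNorm μ f ≤ c :=
  csInf_le ⟨0, fun _ hc' => hc'.1.le⟩ ⟨hc, h⟩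

theorem integral_chi_div_le {X : Type*} [MeasurableSpace X] {μ : Measure X} [IsFiniteMeasure μ]
    {f : X → ℝ} (hf : AEMeasurable f μ) (hf_nonneg : ∀ x, 0 ≤ f x)
    (hint : Integrable (fun x => f x * Real.log (f x)) μ) {c : ℝ} (hc : 1 ≤ c) :
    ∫ x, chi (f x / c) ∂μ ≤
      (∫ x, f x * Real.log (f x) ∂μ + μ.real Set.univ * (1 - Real.log (Real.exp 1 - 1))) / c := by
  set B := 1 - Real.log (Real.exp 1 - 1)
  have hbound : ∀ x, chi (f x / c) ≤ (f x * Real.log (f x) + B) / c := fun x =>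
    (chi_div_le (by linarith [hf_nonneg x]) hc).trans
      (div_le_div_of_nonneg_right (chi_le_mul_log_add (hf_nonneg x)) (by linarith))
  have hmajor : Integrable (fun x => (f x * Real.log (f x) + B) / c) μ :=
    (hint.add (integrable_const B)).div_const c
  have hchi : Integrable (fun x => chi (f x / c)) μ :=
    integrable_of_le_of_le
      (continuous_chi.measurable.comp_aemeasurable (hf.div_const c)).aestronglyMeasurable
      (ae_of_all _ fun x =>
        chi_nonneg (by linarith [div_nonneg (hf_nonneg x) (by linarith : 0 ≤ c)]))
      (ae_of_all _ hbound) (integrable_zero _ _ _) hmajor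
  calc ∫ x, chi (f x / c) ∂μ ≤ ∫ x, (f x * Real.log (f x) + B) / c ∂μ :=
        integral_mono hchi hmajor hbound
    _ = _ := by
        rw [integral_div, integral_add hint (integrable_const B), integral_const, smul_eq_mul,
          mul_comm]

theorem luxNorm_le_of_entropy {X : Type*} [MeasurableSpace X] (μ : Measure X)
    [IsFiniteMeasure μ] (f : X → ℝ) (A A' : ℝ)
    (hf_meas : Measurable f) (hf_nonneg : ∀ x, 0 ≤ f x)
    (hint : Integrable (fun x => f x * Real.log (f x)) μ)
    (hA : ∫ x, f x * Real.log (f x) ∂μ ≤ A)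
    (hA' : A' = max (A + (μ Set.univ).toReal * (1 - Real.log (Real.exp 1 - 1))) 2) :
    (∫ x, chi (f x / A') ∂μ ≤ 1) ∧ luxNorm μ f ≤ A' := by
  have hA'2 : 2 ≤ A' := hA' ▸ le_max_right _ _
  have hA'A : A + μ.real Set.univ * (1 - Real.log (Real.exp 1 - 1)) ≤ A' := hA' ▸ le_max_left _ _
  have key : ∫ x, chi (f x / A') ∂μ ≤ 1 := by
    refine (integral_chi_div_le hf_meas.aemeasurable hf_nonneg hint (by linarith)).trans ?_
    rw [div_le_one (by linarith)]
    linarith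
  refine ⟨key, luxNorm_le_of_integral_chi_le_one (by linarith) ?_⟩
  simpa only [abs_of_nonneg (hf_nonneg _)] using key
end
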